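/- Let P, P0, P1 be polynomials with nonnegative integer coefficients and let r0 ≥ 1, r1 ≥ 1 be natural numbers satisfying the Morse–Bott equalities P = P0 + t^{2r1}·P1 and P = t^{2r0}·P0 + P1. Then the following three conditions are equivalent: (a) every odd-degree coefficient of P0 is zero; (b) every odd-degree coefficient of P1 is zero; (c) every odd-degree coefficient of P is zero. -/
import Mathlib


open Polynomial

private lemma step (P0 P1 : ℤ[X]) (r0 r1 : ℕ) (hr1 : 1 ≤ r1)
    (heq : ∀ k, P0.coeff k + (X ^ (2 * r1) * P1).coeff k
      = (X ^ (2 * r0) * P0).coeff k + P1.coeff k)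
    (h0 : ∀ k, Odd k → P0.coeff k = 0) : ∀ k, Odd k → P1.coeff k = 0 := by
  intro k
  induction k using Nat.strong_induction_on with
  | _ k ih =>
    intro hk
    have h := heq k
    rw [h0 k hk, Polynomial.coeff_X_pow_mul', Polynomial.coeff_X_pow_mul'] at h
    have hz : (if 2 * r0 ≤ k then P0.coeff (k - 2 * r0) else 0) = 0 := by
      split
      · exact h0 _ (Nat.Odd.sub_even (by omega) hk (even_two_mul r0))
      · rfl
    rw [hz, zero_add, zero_add] at h
    rw [← h]
    split
    · rename_i hle
      exact ih _ (by omega) (Nat.Odd.sub_even hle hk (even_two_mul r1))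
    · rfl

/-- Proposition 3.9 (P.oddcoh), Betti-number content: for polynomials with
nonnegative coefficients satisfying the Morse–Bott equalities (`r0, r1 ≥ 1`),
vanishing of all odd-degree coefficients of `P0`, of `P1`, and of `P` are
equivalent. -/
theorem odd_coeff_vanishing_equiv (P P0 P1 : ℤ[X]) (r0 r1 : ℕ)
    (hr0 : 1 ≤ r0) (hr1 : 1 ≤ r1)
    (hP : ∀ k, 0 ≤ P.coeff k) (hP0 : ∀ k, 0 ≤ P0.coeff k) (hP1 : ∀ k, 0 ≤ P1.coeff k)
    (h1 : P = P0 + X ^ (2 * r1) * P1)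
    (h2 : P = X ^ (2 * r0) * P0 + P1) :
    ((∀ k, Odd k → P0.coeff k = 0) ↔ (∀ k, Odd k → P1.coeff k = 0)) ∧
    ((∀ k, Odd k → P0.coeff k = 0) ↔ (∀ k, Odd k → P.coeff k = 0)) := by
  have heq : ∀ k, P0.coeff k + (X ^ (2 * r1) * P1).coeff k
      = (X ^ (2 * r0) * P0).coeff k + P1.coeff k := by
    intro k
    have := congrArg (fun p => Polynomial.coeff p k) (h1.symm.trans h2)
    simpa [Polynomial.coeff_add] using this
  have fwd : (∀ k, Odd k → P0.coeff k = 0) → (∀ k, Odd k → P1.coeff k = 0) :=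
    step P0 P1 r0 r1 hr1 heq
  have bwd : (∀ k, Odd k → P1.coeff k = 0) → (∀ k, Odd k → P0.coeff k = 0) :=
    step P1 P0 r1 r0 hr0 (fun k => by linarith [heq k])
  constructor
  · exact ⟨fwd, bwd⟩
  constructor
  · intro h0 k hk
    have h1' := fwd h0
    have := congrArg (fun p => Polynomial.coeff p k) h1
    simp only [Polynomial.coeff_add, Polynomial.coeff_X_pow_mul'] at this
    rw [this, h0 k hk, zero_add]
    split
    · rename_i hle
      exact h1' _ (Nat.Odd.sub_even hle hk (even_two_mul r1))
    · rfl
  · intro hPz k hk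
    have := congrArg (fun p => Polynomial.coeff p k) h1
    simp only [Polynomial.coeff_add] at this
    rw [hPz k hk] at this
    have hnn : 0 ≤ (X ^ (2 * r1) * P1).coeff k := by
      rw [Polynomial.coeff_X_pow_mul']
      split
      · exact hP1 _
      · exact le_refl 0
    linarith [hP0 k]
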